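/- arXiv:2308.00901 — 2 statements merged into one kernel-verified Lean document; each statement's English description precedes it below -/
import Mathlib

section
/- Let λ be a real number with 0 < λ < 1. Then the improper integral −∫_0^1 log_λ(1−x)/x dx converges and equals ζ_λ(2) = Σ_{n=1}^{∞} (−λ)^{n−1} (1)_{n,1/λ} / (n² (n−1)!). -/
open Finset

/-- The degenerate falling factorial `(x)_{n,λ} = x(x-λ)⋯(x-(n-1)λ)`, with `(x)_{0,λ} = 1`. -/
noncomputable def degFall (x lam : ℝ) (n : ℕ) : ℝ :=
  ∏ i ∈ Finset.range n, (x - i * lam)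

/-- The degenerate harmonic numbers `H_{n,λ} = Σ_{k=1}^n (-λ)^(k-1) (1)_{k,1/λ} / k!`, `H_{0,λ}=0`. -/
noncomputable def degHarm (lam : ℝ) (n : ℕ) : ℝ :=
  ∑ k ∈ Finset.Icc 1 n, (-lam) ^ (k - 1) * degFall 1 (1 / lam) k / (k.factorial : ℝ)

/-- The degenerate harmonic numbers of order `α`:
`H_{n,λ}(α) = Σ_{k=1}^n (-λ)^(k-1) (1)_{k,1/λ} / (k^α (k-1)!)`, `H_{0,λ}(α)=0`. -/
noncomputable def degHarmOrd (lam : ℝ) (α : ℕ) (n : ℕ) : ℝ :=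
  ∑ k ∈ Finset.Icc 1 n,
    (-lam) ^ (k - 1) * degFall 1 (1 / lam) k / ((k : ℝ) ^ α * ((k - 1).factorial : ℝ))

/-- The alternating degenerate harmonic numbers of order `α`:
`H̄_{n,λ}(α) = Σ_{k=1}^n C(n,k) λ^(k-1) (1)_{k,1/λ} / (k^α (k-1)!)`, `H̄_{0,λ}(α)=0`. -/
noncomputable def altDegHarmOrd (lam : ℝ) (α : ℕ) (n : ℕ) : ℝ :=
  ∑ k ∈ Finset.Icc 1 n,
    (n.choose k : ℝ) * lam ^ (k - 1) * degFall 1 (1 / lam) k /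
      ((k : ℝ) ^ α * ((k - 1).factorial : ℝ))

/-- The degenerate logarithm: `degLog λ x = (x^λ - 1)/λ`, i.e. `log_λ(1+t) = degLog λ (1+t)`. -/
noncomputable def degLog (lam x : ℝ) : ℝ :=
  (x ^ lam - 1) / lam

/-- The degenerate polylogarithm
`Li_{k,λ}(x) = Σ_{n=1}^∞ (-λ)^(n-1) (1)_{n,1/λ} x^n / ((n-1)! n^k)` (as a `tsum`, reindexed). -/
noncomputable def degPolylog (k : ℕ) (lam x : ℝ) : ℝ :=
  ∑' n : ℕ, (-lam) ^ n * degFall 1 (1 / lam) (n + 1) * x ^ (n + 1) /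
    ((n.factorial : ℝ) * ((n : ℝ) + 1) ^ k)

/-- The degenerate hyperharmonic numbers of order `α`:
`H_{n,λ}^{(1)}(α) = H_{n,λ}(α)`, `H_{n,λ}^{(r)}(α) = Σ_{k=1}^n H_{k,λ}^{(r-1)}(α)` for `r ≥ 2`. -/
noncomputable def degHyperHarm (lam : ℝ) (α : ℕ) : ℕ → ℕ → ℝ
  | 0, _ => 0
  | 1, n => degHarmOrd lam α n
  | r + 2, n => ∑ k ∈ Finset.Icc 1 n, degHyperHarm lam α (r + 1) k

/-! By the binomial series, `-log_λ(1 - x) / x = ∑ aₙ xⁿ` on `(0, 1)` with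
`aₙ = (-λ)ⁿ (1)_{n+1,1/λ} / (n+1)! = (-1)ⁿ C(λ, n+1) / λ`. For `0 < λ < 1` the recursion
`(n + 2) aₙ₊₁ = (n + 1 - λ) aₙ` gives `0 ≤ aₙ ≤ 1 / (n + 1)`, so `∑ |aₙ| ∫₀¹ xⁿ dx < ∞`: the
series may be integrated term by term, which proves integrability and, since
`∫₀¹ xⁿ dx = 1 / (n + 1)`, yields `∑ aₙ / (n + 1) = ζ_λ(2)`. -/

open Set MeasureTheory Filter Nat

theorem Ring.choose_eq_prod_sub_div_factorial {R : Type*} [Field R] [CharZero R] (a : R)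
    (n : ℕ) : Ring.choose a n = (∏ j ∈ range n, (a - j)) / n ! := by
  rw [Ring.choose_eq_smul, ← Polynomial.aeval_eq_smeval, ← descPochhammer_eval_eq_prod_range,
    ← descPochhammer_map (algebraMap ℤ R), Polynomial.eval_map_algebraMap, smul_eq_mul,
    inv_mul_eq_div]

theorem Real.hasSum_choose_mul_pow (a : ℝ) {x : ℝ} (hx : |x| < 1) :
    HasSum (fun n => Ring.choose a n * x ^ n) ((1 + x) ^ a) := by
  have h := Real.one_add_rpow_hasFPowerSeriesOnBall_zero (a := a) |>.hasSum
    (y := x) (by simpa [Metric.mem_eball, edist_dist, Real.dist_eq] using hx)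
  simpa [binomialSeries, FormalMultilinearSeries.ofScalars_apply_eq, mul_comm] using h

section IntegralPowerSeries

theorem integral_Ioo_zero_one_pow (n : ℕ) : ∫ x in Ioo (0 : ℝ) 1, x ^ n = 1 / (n + 1) := by
  rw [← integral_Ioc_eq_integral_Ioo, ← intervalIntegral.integral_of_le zero_le_one, integral_pow]
  simp

theorem integral_Ioo_zero_one_norm_mul_pow (c : ℝ) (n : ℕ) :
    ∫ x in Ioo (0 : ℝ) 1, ‖c * x ^ n‖ = |c| / (n + 1) := by
  rw [setIntegral_congr_fun measurableSet_Ioo (g := fun x => |c| * x ^ n) fun x hx => by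
    simp [abs_of_pos hx.1], integral_const_mul, integral_Ioo_zero_one_pow, mul_one_div]

theorem integrableOn_Ioo_zero_one_mul_pow (c : ℝ) (n : ℕ) :
    IntegrableOn (fun x : ℝ => c * x ^ n) (Ioo 0 1) :=
  (continuous_const.mul (continuous_pow n)).integrableOn_Icc.mono_set Ioo_subset_Icc_self

variable {a : ℕ → ℝ} {f : ℝ → ℝ}

theorem hasSum_integral_Ioo_of_hasSum_mul_pow (ha : Summable fun n => |a n| / (n + 1))
    (hf : ∀ x ∈ Ioo (0 : ℝ) 1, HasSum (fun n => a n * x ^ n) (f x)) :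
    HasSum (fun n => a n / (n + 1)) (∫ x in Ioo (0 : ℝ) 1, f x) := by
  have h := hasSum_integral_of_summable_integral_norm
    (fun n => integrableOn_Ioo_zero_one_mul_pow (a n) n)
    (by simpa only [integral_Ioo_zero_one_norm_mul_pow] using ha)
  simp only [integral_const_mul, integral_Ioo_zero_one_pow, mul_one_div] at h
  rwa [setIntegral_congr_fun measurableSet_Ioo fun x hx => (hf x hx).tsum_eq] at h

theorem integrableOn_Ioo_of_hasSum_mul_pow (ha : Summable fun n => |a n| / (n + 1))
    (hf : ∀ x ∈ Ioo (0 : ℝ) 1, HasSum (fun n => a n * x ^ n) (f x)) :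
    IntegrableOn f (Ioo 0 1) := by
  have hterm (n : ℕ) :
      ∫⁻ x in Ioo (0 : ℝ) 1, ‖a n * x ^ n‖ₑ = ENNReal.ofReal (|a n| / (n + 1)) := by
    rw [← integral_Ioo_zero_one_norm_mul_pow, ofReal_integral_norm_eq_lintegral_enorm
      (integrableOn_Ioo_zero_one_mul_pow (a n) n)]
  refine integrable_of_tendsto (G := fun N x => ∑ n ∈ range N, a n * x ^ n) ?_ (fun N => ?_) ?_
  · filter_upwards [ae_restrict_mem measurableSet_Ioo] with x hx using (hf x hx).tendsto_sum_nat
  · fun_prop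
  refine ne_top_of_le_ne_top (ENNReal.ofReal_ne_top (r := ∑' n, |a n| / (n + 1))) ?_
  refine liminf_le_of_frequently_le' (Frequently.of_forall fun N => ?_)
  calc ∫⁻ x in Ioo (0 : ℝ) 1, ‖∑ n ∈ range N, a n * x ^ n‖ₑ
      ≤ ∫⁻ x in Ioo (0 : ℝ) 1, ∑ n ∈ range N, ‖a n * x ^ n‖ₑ :=
        lintegral_mono fun x => enorm_sum_le _ _
    _ = ∑ n ∈ range N, ENNReal.ofReal (|a n| / (n + 1)) := by
        rw [lintegral_finsetSum' _ fun n _ => by fun_prop]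
        simp only [hterm]
    _ ≤ ∑' n, ENNReal.ofReal (|a n| / (n + 1)) := ENNReal.sum_le_tsum _
    _ = ENNReal.ofReal (∑' n, |a n| / (n + 1)) :=
        (ENNReal.ofReal_tsum_of_nonneg (fun n => by positivity) ha).symm

end IntegralPowerSeries

theorem pow_mul_degFall {lam : ℝ} (hlam : lam ≠ 0) (x : ℝ) (n : ℕ) :
    lam ^ n * degFall x (1 / lam) n = ∏ j ∈ range n, (lam * x - j) := by
  rw [degFall, ← card_range n, ← prod_const, card_range, ← prod_mul_distrib]
  refine prod_congr rfl fun j _ => ?_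
  field_simp

theorem choose_eq_pow_mul_degFall {lam : ℝ} (hlam : lam ≠ 0) (n : ℕ) :
    Ring.choose lam n = lam ^ n * degFall 1 (1 / lam) n / n ! := by
  rw [Ring.choose_eq_prod_sub_div_factorial, pow_mul_degFall hlam, mul_one]

noncomputable def negDegLogCoeff (lam : ℝ) (n : ℕ) : ℝ :=
  (-lam) ^ n * degFall 1 (1 / lam) (n + 1) / (n + 1) !

theorem negDegLogCoeff_zero (lam : ℝ) : negDegLogCoeff lam 0 = 1 := by
  simp [negDegLogCoeff, degFall]

theorem negDegLogCoeff_succ {lam : ℝ} (hlam : lam ≠ 0) (n : ℕ) :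
    negDegLogCoeff lam (n + 1) = (n + 1 - lam) / (n + 2) * negDegLogCoeff lam n := by
  rw [negDegLogCoeff, negDegLogCoeff, degFall, prod_range_succ, ← degFall, factorial_succ (n + 1)]
  push_cast
  field_simp
  ring

theorem negDegLogCoeff_mem_Icc {lam : ℝ} (h0 : 0 < lam) (h1 : lam ≤ 1) (n : ℕ) :
    negDegLogCoeff lam n ∈ Set.Icc 0 (1 / ((n : ℝ) + 1)) := by
  induction n with
  | zero => simp [negDegLogCoeff_zero]
  | succ n ih =>
    obtain ⟨ih0, ih1⟩ := ih
    have hn : (0 : ℝ) ≤ n := n.cast_nonneg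
    rw [negDegLogCoeff_succ h0.ne']
    push_cast
    constructor
    · have : 0 ≤ (n + 1 - lam) / (n + 2) := div_nonneg (by linarith) (by linarith)
      positivity
    · rw [le_div_iff₀ (by positivity)] at ih1
      rw [div_mul_eq_mul_div, div_le_div_iff₀ (by positivity) (by positivity)]
      nlinarith

theorem hasSum_negDegLogCoeff_mul_pow {lam : ℝ} (hlam : lam ≠ 0) {x : ℝ} (hx0 : x ≠ 0)
    (hx1 : |x| < 1) :
    HasSum (fun n => negDegLogCoeff lam n * x ^ n) (-(degLog lam (1 - x) / x)) := by
  have h : HasSum (fun n => Ring.choose lam (n + 1) * (-x) ^ (n + 1)) ((1 - x) ^ lam - 1) := by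
    simpa [← sub_eq_add_neg] using
      (hasSum_nat_add_iff' 1).mpr (Real.hasSum_choose_mul_pow lam (x := -x) (by simpa))
  rw [show -(degLog lam (1 - x) / x) = -1 / (lam * x) * ((1 - x) ^ lam - 1) by
    rw [degLog]; field_simp]
  refine (h.mul_left _).congr_fun fun n => ?_
  rw [negDegLogCoeff, choose_eq_pow_mul_degFall hlam, factorial_succ]
  push_cast
  field_simp
  rw [neg_pow lam, neg_pow x]
  ring

theorem summable_abs_negDegLogCoeff_div {lam : ℝ} (h0 : 0 < lam) (h1 : lam ≤ 1) :
    Summable fun n : ℕ => |negDegLogCoeff lam n| / (n + 1) := by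
  have hp : Summable fun n : ℕ => 1 / ((n : ℝ) + 1) ^ 2 := by
    simpa using (summable_nat_add_iff 1).mpr (Real.summable_one_div_nat_pow.mpr one_lt_two)
  refine hp.of_nonneg_of_le (fun n => by positivity) fun n => ?_
  obtain ⟨hnn, hle⟩ := negDegLogCoeff_mem_Icc h0 h1 n
  rw [abs_of_nonneg hnn, sq, ← div_div]
  gcongr

theorem stmt_10 (lam : ℝ) (hlam0 : 0 < lam) (hlam1 : lam < 1) :
    MeasureTheory.IntegrableOn (fun x : ℝ => degLog lam (1 - x) / x) (Set.Ioo 0 1) ∧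
      -∫ x in Set.Ioo (0 : ℝ) 1, degLog lam (1 - x) / x =
        ∑' n : ℕ, (-lam) ^ n * degFall 1 (1 / lam) (n + 1) /
          (((n : ℝ) + 1) ^ 2 * (n.factorial : ℝ)) := by
  have hsum := summable_abs_negDegLogCoeff_div hlam0 hlam1.le
  have hseries : ∀ x ∈ Ioo (0 : ℝ) 1, HasSum (fun n => negDegLogCoeff lam n * x ^ n)
      (-(degLog lam (1 - x) / x)) := fun x hx =>
    hasSum_negDegLogCoeff_mul_pow hlam0.ne' hx.1.ne' (abs_lt.2 ⟨by linarith [hx.1], hx.2⟩)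
  refine ⟨by simpa using (integrableOn_Ioo_of_hasSum_mul_pow hsum hseries).neg, ?_⟩
  rw [← integral_neg, ← (hasSum_integral_Ioo_of_hasSum_mul_pow hsum hseries).tsum_eq]
  refine tsum_congr fun n => ?_
  rw [negDegLogCoeff, factorial_succ]
  push_cast
  field_simp
end

section
/- Let λ be a nonzero real number, let r and α be positive integers, and let t be a real number with |t| < 1. Then the series Σ_{n=1}^{∞} H_{n,λ}^{(r)}(α) t^n converges and Σ_{n=1}^{∞} H_{n,λ}^{(r)}(α) t^n = Li_{α,λ}(t)/(1−t)^r. -/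
open Finset

/-!
The degenerate polylogarithm is the power series `Li_{α,λ}(t) = ∑ cₙ tⁿ` whose coefficients are
dominated by `∏_{i<n} (|λ| + i + 1) / n!`, a binomial-type majorant, so it converges absolutely
for `|t| < 1`. Taking partial sums of the coefficients multiplies an absolutely convergent power
series by `∑ tⁿ = 1 / (1 - t)` (Cauchy product). Since `H_{n,λ}^{(1)}(α)` is the `n`-th partial
sum of the `cₖ` and `H_{n,λ}^{(r+1)}(α)` that of the `H_{k,λ}^{(r)}(α)`, induction on `r` gives
`Li_{α,λ}(t) / (1 - t)^r`.
-/

open Filter Topology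
open scoped Nat

section PartialSums

variable {R : Type*} [NormedDivisionRing R] {a : ℕ → R} {t : R}

lemma sum_range_succ_mul_pow_eq (n : ℕ) :
    (∑ k ∈ range (n + 1), a k) * t ^ n = ∑ k ∈ range (n + 1), a k * t ^ k * t ^ (n - k) := by
  rw [sum_mul]
  refine sum_congr rfl fun k hk => ?_
  rw [mul_assoc, ← pow_add, Nat.add_sub_cancel' (Nat.lt_succ_iff.mp (mem_range.mp hk))]

lemma summable_norm_sum_range_succ_mul_pow [CompleteSpace R] (ht : ‖t‖ < 1)
    (ha : Summable fun n => ‖a n * t ^ n‖) :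
    Summable fun n => ‖(∑ k ∈ range (n + 1), a k) * t ^ n‖ := by
  simpa only [sum_range_succ_mul_pow_eq] using
    summable_norm_sum_mul_range_of_summable_norm ha (summable_norm_geometric_of_norm_lt_one ht)

lemma HasSum.sum_range_succ_mul_pow [CompleteSpace R] {S : R} (hS : HasSum (fun n => a n * t ^ n) S)
    (ht : ‖t‖ < 1) (ha : Summable fun n => ‖a n * t ^ n‖) :
    HasSum (fun n => (∑ k ∈ range (n + 1), a k) * t ^ n) (S * (1 - t)⁻¹) := by
  have h := hasSum_sum_range_mul_of_summable_norm ha (summable_norm_geometric_of_norm_lt_one ht)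
  rw [hS.tsum_eq, tsum_geometric_of_norm_lt_one ht] at h
  simpa only [sum_range_succ_mul_pow_eq] using h

end PartialSums

lemma sum_Icc_one_eq_sum_range_succ {M : Type*} [AddCommMonoid M] {a : ℕ → M} (ha : a 0 = 0)
    (n : ℕ) : ∑ k ∈ Icc 1 n, a k = ∑ k ∈ range (n + 1), a k := by
  rw [range_eq_Ico, sum_eq_sum_Ico_succ_bot (Nat.succ_pos n), ha, zero_add]
  rfl

lemma abs_mul_one_sub_div_le (a c : ℝ) : |a * (1 - c / a)| ≤ |a| + |c| := by
  rcases eq_or_ne a 0 with rfl | ha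
  · simp only [zero_mul, abs_zero, zero_add, abs_nonneg]
  · rw [mul_one_sub, mul_div_cancel₀ c ha]
    exact abs_sub a c

lemma summable_prod_add_div_factorial_mul_pow {L x : ℝ} (hL : 0 ≤ L) (hx₀ : 0 ≤ x) (hx : x < 1) :
    Summable fun n : ℕ => (∏ i ∈ range n, (L + (i + 1))) / n ! * x ^ n := by
  set f : ℕ → ℝ := fun n => (∏ i ∈ range n, (L + (i + 1))) / n ! * x ^ n
  have hf_nonneg : ∀ n, 0 ≤ f n := fun n => by positivity
  have hf_succ : ∀ n : ℕ, f (n + 1) = (1 + L * (1 / ((n : ℝ) + 1))) * x * f n := fun n => by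
    simp only [f, prod_range_succ, Nat.factorial_succ, pow_succ]
    push_cast
    field_simp
    ring
  have hlim : Tendsto (fun n : ℕ => (1 + L * (1 / ((n : ℝ) + 1))) * x) atTop (𝓝 x) := by
    simpa using ((tendsto_one_div_add_atTop_nhds_zero_nat.const_mul L).const_add 1).mul_const x
  obtain ⟨q, hxq, hq⟩ := exists_between hx
  refine summable_of_ratio_norm_eventually_le hq ?_
  filter_upwards [hlim.eventually_le_const hxq] with n hn
  rw [Real.norm_of_nonneg (hf_nonneg _), Real.norm_of_nonneg (hf_nonneg _), hf_succ]
  exact mul_le_mul_of_nonneg_right hn (hf_nonneg n)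

/-- The coefficient of `x ^ n` in `Li_{α,λ}(x)`; it vanishes at `n = 0`, so that
`H_{n,λ}(α) = ∑_{k ≤ n} degPolylogCoeff λ α k`. -/
noncomputable def degPolylogCoeff (lam : ℝ) (α : ℕ) : ℕ → ℝ
  | 0 => 0
  | n + 1 => (-lam) ^ n * degFall 1 (1 / lam) (n + 1) / ((n ! : ℝ) * ((n : ℝ) + 1) ^ α)

lemma abs_neg_pow_mul_degFall_le (lam : ℝ) (n : ℕ) :
    |(-lam) ^ n * degFall 1 (1 / lam) (n + 1)| ≤ ∏ i ∈ range n, (|lam| + (i + 1)) := by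
  have hfactor : ∀ i : ℕ, |-lam * (1 - (i + 1 : ℕ) * (1 / lam))| ≤ |lam| + (i + 1) := fun i => by
    have h := abs_mul_one_sub_div_le (-lam) (-((i : ℝ) + 1))
    rw [neg_div_neg_eq, abs_neg lam, abs_neg ((i : ℝ) + 1),
      abs_of_nonneg (by positivity : (0 : ℝ) ≤ i + 1)] at h
    rwa [mul_one_div, Nat.cast_succ]
  rw [degFall, prod_range_succ', pow_eq_prod_const, Nat.cast_zero, zero_mul, sub_zero, mul_one,
    ← prod_mul_distrib, abs_prod]
  exact prod_le_prod (fun _ _ => abs_nonneg _) fun i _ => hfactor i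

lemma abs_degPolylogCoeff_succ_le (lam : ℝ) (α n : ℕ) :
    |degPolylogCoeff lam α (n + 1)| ≤ (∏ i ∈ range n, (|lam| + (i + 1))) / n ! := by
  have hP : 0 ≤ ∏ i ∈ range n, (|lam| + (i + 1)) := by positivity
  rw [degPolylogCoeff, abs_div, abs_of_pos (by positivity : (0 : ℝ) < n ! * ((n : ℝ) + 1) ^ α)]
  calc _ ≤ (∏ i ∈ range n, (|lam| + (i + 1))) / (n ! * ((n : ℝ) + 1) ^ α) :=
        div_le_div_of_nonneg_right (abs_neg_pow_mul_degFall_le lam n) (by positivity)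
    _ ≤ _ := div_le_div_of_nonneg_left hP (by positivity)
        (le_mul_of_one_le_right (by positivity) (one_le_pow₀ (le_add_of_nonneg_left n.cast_nonneg)))

lemma summable_norm_degPolylogCoeff_mul_pow (lam : ℝ) (α : ℕ) {t : ℝ} (ht : |t| < 1) :
    Summable fun n => ‖degPolylogCoeff lam α n * t ^ n‖ := by
  refine (summable_nat_add_iff 1).mp <| Summable.of_nonneg_of_le (fun _ => norm_nonneg _)
    (fun n => ?_) ((summable_prod_add_div_factorial_mul_pow (abs_nonneg lam) (abs_nonneg t)
      ht).mul_right |t|)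
  rw [Real.norm_eq_abs, abs_mul, abs_pow, mul_assoc, ← pow_succ]
  exact mul_le_mul_of_nonneg_right (abs_degPolylogCoeff_succ_le lam α n) (by positivity)

lemma hasSum_degPolylogCoeff_mul_pow (lam : ℝ) (α : ℕ) {t : ℝ} (ht : |t| < 1) :
    HasSum (fun n => degPolylogCoeff lam α n * t ^ n) (degPolylog α lam t) := by
  have hterm : ∀ n : ℕ, (-lam) ^ n * degFall 1 (1 / lam) (n + 1) * t ^ (n + 1) /
      ((n.factorial : ℝ) * ((n : ℝ) + 1) ^ α) = degPolylogCoeff lam α (n + 1) * t ^ (n + 1) :=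
    fun n => by rw [degPolylogCoeff, div_mul_eq_mul_div, mul_right_comm]
  rw [← hasSum_nat_add_iff' 1, sum_range_one, degPolylogCoeff, zero_mul, sub_zero, degPolylog]
  simp_rw [hterm]
  exact ((summable_nat_add_iff 1).mpr
    (summable_norm_degPolylogCoeff_mul_pow lam α ht).of_norm).hasSum

lemma degHarmOrd_eq_sum_range (lam : ℝ) (α n : ℕ) :
    degHarmOrd lam α n = ∑ k ∈ range (n + 1), degPolylogCoeff lam α k := by
  rw [← sum_Icc_one_eq_sum_range_succ rfl, degHarmOrd]
  refine sum_congr rfl fun k hk => ?_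
  obtain ⟨j, rfl⟩ := Nat.exists_eq_add_of_le' (mem_Icc.mp hk).1
  rw [degPolylogCoeff, Nat.add_sub_cancel, Nat.cast_succ]
  ring

lemma degHyperHarm_succ_zero (lam : ℝ) (α r : ℕ) : degHyperHarm lam α (r + 1) 0 = 0 := by
  cases r <;> simp [degHyperHarm, degHarmOrd]

lemma degHyperHarm_add_two (lam : ℝ) (α r n : ℕ) :
    degHyperHarm lam α (r + 2) n = ∑ k ∈ range (n + 1), degHyperHarm lam α (r + 1) k :=
  sum_Icc_one_eq_sum_range_succ (degHyperHarm_succ_zero lam α r) n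

section GeneratingFunction

variable (lam : ℝ) (α : ℕ) {t : ℝ}

lemma summable_norm_degHyperHarm_mul_pow (ht : |t| < 1) (r : ℕ) :
    Summable fun n => ‖degHyperHarm lam α (r + 1) n * t ^ n‖ := by
  have ht' : ‖t‖ < 1 := by rwa [Real.norm_eq_abs]
  induction r with
  | zero =>
    simpa only [zero_add, degHyperHarm, degHarmOrd_eq_sum_range] using
      summable_norm_sum_range_succ_mul_pow ht' (summable_norm_degPolylogCoeff_mul_pow lam α ht)
  | succ r ih =>
    simpa only [degHyperHarm_add_two] using summable_norm_sum_range_succ_mul_pow ht' ih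

lemma hasSum_degHyperHarm_mul_pow (ht : |t| < 1) (r : ℕ) :
    HasSum (fun n => degHyperHarm lam α (r + 1) n * t ^ n)
      (degPolylog α lam t / (1 - t) ^ (r + 1)) := by
  have ht' : ‖t‖ < 1 := by rwa [Real.norm_eq_abs]
  induction r with
  | zero =>
    simpa only [zero_add, pow_one, degHyperHarm, degHarmOrd_eq_sum_range, div_eq_mul_inv] using
      (hasSum_degPolylogCoeff_mul_pow lam α ht).sum_range_succ_mul_pow ht'
        (summable_norm_degPolylogCoeff_mul_pow lam α ht)
  | succ r ih =>
    simpa only [degHyperHarm_add_two, pow_succ _ (r + 1), div_eq_mul_inv, mul_inv, mul_assoc] using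
      ih.sum_range_succ_mul_pow ht' (summable_norm_degHyperHarm_mul_pow lam α ht r)

end GeneratingFunction

theorem stmt_15_general (lam : ℝ) (r α : ℕ) (hr : 1 ≤ r) (t : ℝ) (ht : |t| < 1) :
    HasSum (fun n : ℕ => degHyperHarm lam α r n * t ^ n)
      (degPolylog α lam t / (1 - t) ^ r) := by
  obtain ⟨r, rfl⟩ := Nat.exists_eq_add_of_le' hr
  exact hasSum_degHyperHarm_mul_pow lam α ht r

theorem stmt_15 (lam : ℝ) (hlam : lam ≠ 0) (r α : ℕ) (hr : 1 ≤ r) (hα : 1 ≤ α)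
    (t : ℝ) (ht : |t| < 1) :
    HasSum (fun n : ℕ => degHyperHarm lam α r n * t ^ n)
      (degPolylog α lam t / (1 - t) ^ r) :=
  stmt_15_general lam r α hr t ht
end
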